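/- Let p_1, …, p_n (n ≥ 2, indices mod n) be points in ℝ^d (d ≥ 2) with p_i ≠ p_{i+1} for all i, and suppose that for each i the vector u_i = (p_{i-1}−p_i)/‖p_{i-1}−p_i‖ + (p_{i+1}−p_i)/‖p_{i+1}−p_i‖ is nonzero; set v_i = u_i/‖u_i‖. Then the origin belongs to the convex hull of {v_1, …, v_n}. -/

import Mathlib

/-! With `e i` the unit vector along the edge from `p i` to `p (i + 1)`, the bisector is
`u i = e i - e (i - 1)`, so the bisectors telescope to zero over one period. Hence
`∑ ‖u i‖ • (‖u i‖⁻¹ • u i) = 0` exhibits the origin as a convex combination of the unit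
bisectors, with weights proportional to `‖u i‖`. -/

open scoped RealInnerProductSpace

noncomputable section

/-- The (non-normalized) inner angle bisector direction of the closed polygonal path `p`
at the vertex `p i`. -/
def bisector {d : ℕ} (p : ℤ → EuclideanSpace ℝ (Fin d)) (i : ℤ) : EuclideanSpace ℝ (Fin d) :=
  ‖p (i - 1) - p i‖⁻¹ • (p (i - 1) - p i) + ‖p (i + 1) - p i‖⁻¹ • (p (i + 1) - p i)

def unitEdge {d : ℕ} (p : ℤ → EuclideanSpace ℝ (Fin d)) (i : ℤ) : EuclideanSpace ℝ (Fin d) :=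
  ‖p (i + 1) - p i‖⁻¹ • (p (i + 1) - p i)

theorem bisector_eq_unitEdge_sub {d : ℕ} (p : ℤ → EuclideanSpace ℝ (Fin d)) (i : ℤ) :
    bisector p i = unitEdge p i - unitEdge p (i - 1) := by
  rw [bisector, unitEdge, unitEdge, sub_add_cancel, ← neg_sub (p (i - 1)) (p i), norm_neg,
    smul_neg, sub_neg_eq_add, add_comm]

theorem sum_range_bisector_eq_zero {d n : ℕ} {p : ℤ → EuclideanSpace ℝ (Fin d)}
    (hper : ∀ i : ℤ, p (i + (n : ℤ)) = p i) : ∑ i ∈ Finset.range n, bisector p i = 0 := by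
  have hedge : unitEdge p ((n : ℤ) - 1) = unitEdge p (-1) := by
    rw [unitEdge, unitEdge, sub_add_cancel, neg_add_cancel, ← hper 0, ← hper (-1), zero_add,
      neg_add_eq_sub]
  simp only [bisector_eq_unitEdge_sub]
  simpa [hedge] using Finset.sum_range_sub (fun k : ℕ => unitEdge p ((k : ℤ) - 1)) n

theorem norm_smul_inv_norm_smul {E : Type*} [NormedAddCommGroup E] [NormedSpace ℝ E] (x : E) :
    ‖x‖ • ‖x‖⁻¹ • x = x := by
  rcases eq_or_ne x 0 with rfl | hx
  · simp
  · exact smul_inv_smul₀ (norm_ne_zero_iff.mpr hx) x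

theorem zero_mem_convexHull_range_inv_norm_smul {ι E : Type*} [NormedAddCommGroup E]
    [NormedSpace ℝ E] (t : Finset ι) {u : ι → E} (hsum : ∑ i ∈ t, u i = 0)
    (hne : ∃ i ∈ t, u i ≠ 0) : (0 : E) ∈ convexHull ℝ (Set.range fun i => ‖u i‖⁻¹ • u i) := by
  obtain ⟨j, hj, hu⟩ := hne
  have hpos : 0 < ∑ i ∈ t, ‖u i‖ :=
    Finset.sum_pos' (fun i _ => norm_nonneg (u i)) ⟨j, hj, norm_pos_iff.mpr hu⟩
  have hcenter : t.centerMass (fun i => ‖u i‖) (fun i => ‖u i‖⁻¹ • u i) = 0 := by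
    simp only [Finset.centerMass, norm_smul_inv_norm_smul, hsum, smul_zero]
  rw [← hcenter]
  exact t.centerMass_mem_convexHull (fun i _ => norm_nonneg _) hpos fun i _ => Set.mem_range_self i

theorem origin_mem_convexHull_of_bisectors_general
    {d n : ℕ} (hn : 2 ≤ n) (p : ℤ → EuclideanSpace ℝ (Fin d))
    (hper : ∀ i : ℤ, p (i + (n : ℤ)) = p i)
    (hu : ∀ i : ℤ, bisector p i ≠ 0) :
    (0 : EuclideanSpace ℝ (Fin d)) ∈
      convexHull ℝ (Set.range fun i : ℤ => ‖bisector p i‖⁻¹ • bisector p i) :=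
  convexHull_mono (Set.range_comp_subset_range (Nat.cast : ℕ → ℤ) _) <|
    zero_mem_convexHull_range_inv_norm_smul (Finset.range n) (sum_range_bisector_eq_zero hper)
      ⟨0, Finset.mem_range.mpr (by omega), hu 0⟩

/-- For a closed polygonal path `p` (an `n`-periodic sequence of vertices, consecutive
vertices distinct) whose inner angle bisector directions are all nonzero, the origin lies in
the convex hull of the unit inner angle bisector vectors. -/
theorem origin_mem_convexHull_of_bisectors
    {d n : ℕ} (hd : 2 ≤ d) (hn : 2 ≤ n) (p : ℤ → EuclideanSpace ℝ (Fin d))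
    (hper : ∀ i : ℤ, p (i + (n : ℤ)) = p i) (hne : ∀ i : ℤ, p i ≠ p (i + 1))
    (hu : ∀ i : ℤ, bisector p i ≠ 0) :
    (0 : EuclideanSpace ℝ (Fin d)) ∈
      convexHull ℝ (Set.range fun i : ℤ => ‖bisector p i‖⁻¹ • bisector p i) :=
  origin_mem_convexHull_of_bisectors_general hn p hper hu
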